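/- Let n ≥ 4, let π/2 ≤ η ≤ π, and equip each digraph Y_{k,n−k} with its η-function θ. Suppose a, b ∈ {0,…,n} satisfy a ≥ n−a, b ≥ n−b (i.e., a, b ≥ n/2) and a ≠ b. Then the characteristic polynomials of U_θ^{(2,+)}(Y_{a,n−a}) and U_θ^{(2,+)}(Y_{b,n−b}) are different. -/

import Mathlib

/-!
Only the backtracking walk `a, a⁻¹, a` contributes to the diagonal entry `(D_θ U_θ²)_{aa}`, which
is therefore `(2/deg o(a) - 1)(2/deg t(a) - 1) e^{iθ(a)}`. When every degree is at least `3` the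
real factor is positive, and for `π/2 ≤ η ≤ π` the cosine of `θ(a)` is positive exactly on arcs
lying in a digon; hence `tr U_θ^{(2,+)}` is the number of ordered digons. The trace is read off
the characteristic polynomial, and `Y_{k,n-k}` has `k(k-1) + (n-k)(n-k-1)` ordered digons,
which is strictly increasing in `k` for `n/2 ≤ k ≤ n`.
-/

open Matrix Polynomial

noncomputable section

variable {V : Type} [Fintype V] [DecidableEq V]

/-- The set of symmetric arcs of a simple graph `G`: ordered pairs of adjacent vertices. -/
abbrev GArc (G : SimpleGraph V) : Type := {p : V × V // G.Adj p.1 p.2}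

/-- The origin of an arc. -/
def arcO {G : SimpleGraph V} (a : GArc G) : V := a.1.1

/-- The terminus of an arc. -/
def arcT {G : SimpleGraph V} (a : GArc G) : V := a.1.2

/-- The inverse of an arc. -/
def arcInv {G : SimpleGraph V} (a : GArc G) : GArc G := ⟨(a.1.2, a.1.1), a.2.symm⟩

/-- The boundary matrix `K`, with `K_{v,a} = δ_{v,t(a)} / √(deg t(a))`. -/
def bdK (G : SimpleGraph V) [DecidableRel G.Adj] : Matrix V (GArc G) ℂ :=
  fun v a => if v = arcT a then ((1 / Real.sqrt (G.degree (arcT a)) : ℝ) : ℂ) else 0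

/-- The coin operator `C = 2K*K - I`. -/
def coinC (G : SimpleGraph V) [DecidableRel G.Adj] : Matrix (GArc G) (GArc G) ℂ :=
  (2 : ℂ) • ((bdK G)ᴴ * bdK G) - 1

/-- The shift operator `S`, with `S_{ab} = δ_{a,b⁻¹}`. -/
def shiftS (G : SimpleGraph V) : Matrix (GArc G) (GArc G) ℂ :=
  fun a b => if a = arcInv b then 1 else 0

/-- The perturbed shift `S_θ`, with `(S_θ)_{ab} = e^{iθ(b)} δ_{a,b⁻¹}`. -/
def shiftStheta (G : SimpleGraph V) (θ : GArc G → ℝ) : Matrix (GArc G) (GArc G) ℂ :=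
  fun a b => if a = arcInv b then Complex.exp ((θ b : ℂ) * Complex.I) else 0

/-- The Grover transfer matrix `U = SC`. -/
def groverU (G : SimpleGraph V) [DecidableRel G.Adj] : Matrix (GArc G) (GArc G) ℂ :=
  shiftS G * coinC G

/-- The transfer matrix `U_θ = S_θ C`. -/
def transferU (G : SimpleGraph V) [DecidableRel G.Adj] (θ : GArc G → ℝ) :
    Matrix (GArc G) (GArc G) ℂ :=
  shiftStheta G θ * coinC G

/-- The diagonal matrix `D_θ` with `(D_θ)_{ab} = e^{iθ(a)} δ_{ab}`. -/
def Dtheta (G : SimpleGraph V) (θ : GArc G → ℝ) : Matrix (GArc G) (GArc G) ℂ :=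
  Matrix.diagonal fun a => Complex.exp ((θ a : ℂ) * Complex.I)

/-- The positive support of a (real-valued) complex matrix. -/
def suppPos {α : Type} (M : Matrix α α ℂ) : Matrix α α ℂ :=
  fun a b => if 0 < (M a b).re then 1 else 0

/-- The negative support of a (real-valued) complex matrix. -/
def suppNeg {α : Type} (M : Matrix α α ℂ) : Matrix α α ℂ :=
  fun a b => if (M a b).re < 0 then 1 else 0

/-- The positive support of a real matrix. -/
def suppPosR {α : Type} (M : Matrix α α ℝ) : Matrix α α ℝ :=
  fun a b => if 0 < M a b then 1 else 0

/-- The negative support of a real matrix. -/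
def suppNegR {α : Type} (M : Matrix α α ℝ) : Matrix α α ℝ :=
  fun a b => if M a b < 0 then 1 else 0

/-- A digraph on `V`: an irreflexive (Boolean) arc relation. -/
structure Dgraph (V : Type) where
  adj : V → V → Bool
  loopless : ∀ v, adj v v = false

namespace Dgraph

/-- `(x,y)` is an arc of `D`. -/
def Adj (D : Dgraph V) (x y : V) : Prop := D.adj x y = true

instance (D : Dgraph V) : DecidableRel D.Adj := fun _ _ => by unfold Adj; infer_instance

/-- The underlying (undirected simple) graph `G^±`. -/
def underlying (D : Dgraph V) : SimpleGraph V where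
  Adj x y := D.Adj x y ∨ D.Adj y x
  symm := ⟨fun _ _ h => h.symm⟩
  loopless := ⟨fun v h => by
    rcases h with h | h <;> exact absurd h (by simp [Adj, D.loopless v])⟩

instance (D : Dgraph V) : DecidableRel D.underlying.Adj :=
  fun x y => inferInstanceAs (Decidable (D.Adj x y ∨ D.Adj y x))

/-- The transpose digraph `G⁻¹`. -/
def transpose (D : Dgraph V) : Dgraph V where
  adj x y := D.adj y x
  loopless := D.loopless

end Dgraph

/-- The `η`-function of a digraph `D`: `η` on `A∖A⁻¹`, `-η` on `A⁻¹∖A`, `0` on digons. -/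
def etaFun (D : Dgraph V) (η : ℝ) (a : GArc D.underlying) : ℝ :=
  if D.Adj (arcO a) (arcT a) then (if D.Adj (arcT a) (arcO a) then 0 else η) else -η

/-- The `η`-Hermitian adjacency matrix `H_η`. -/
def Heta (D : Dgraph V) (η : ℝ) : Matrix V V ℂ :=
  fun x y =>
    if D.Adj x y then (if D.Adj y x then 1 else Complex.exp ((η : ℂ) * Complex.I))
    else if D.Adj y x then Complex.exp (-(η : ℂ) * Complex.I) else 0

/-- The diagonal matrix `D^{-1/2}` of inverse square roots of degrees. -/
def degHalfInv (D : Dgraph V) : Matrix V V ℂ :=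
  Matrix.diagonal fun x => ((1 / Real.sqrt (D.underlying.degree x) : ℝ) : ℂ)

/-- The normalized `η`-Hermitian adjacency matrix `H̃_η = D^{-1/2} H_η D^{-1/2}`. -/
def normHeta (D : Dgraph V) (η : ℝ) : Matrix V V ℂ :=
  degHalfInv D * Heta D η * degHalfInv D

/-- The multiset of preimages of `μ` under `φ(z) = (z + z⁻¹)/2` on the unit circle:
the distinct roots of `z² - 2μz + 1`. -/
def phiInv (μ : ℂ) : Multiset ℂ :=
  ((X ^ 2 - Polynomial.C (2 * μ) * X + 1 : Polynomial ℂ).roots).dedup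

/-- A closed path in a graph: a nonempty chain of arcs returning to its start. -/
structure ClosedPath (G : SimpleGraph V) where
  arcs : List (GArc G)
  ne : arcs ≠ []
  chain : arcs.Chain' fun a b => arcT a = arcO b
  closed : arcT (arcs.getLast ne) = arcO (arcs.head ne)

/-- `ℐ(c) = Σ_j θ(a_j)` for a closed path `c`. -/
def pathSum {G : SimpleGraph V} (θ : GArc G → ℝ) (c : ClosedPath G) : ℝ :=
  (c.arcs.map θ).sum

/-- `x ∈ 2πℤ`. -/
def in2piZ (x : ℝ) : Prop := ∃ m : ℤ, x = 2 * Real.pi * m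

/-- `x ∈ 2π(ℤ + 1/2)`. -/
def in2piZhalf (x : ℝ) : Prop := ∃ m : ℤ, x = 2 * Real.pi * (m + 1 / 2)

/-- The matrix `F_t` with `(F_t)_{x,a} = δ_{x,t(a)}`. -/
def Ft (G : SimpleGraph V) : Matrix V (GArc G) ℂ := fun x a => if x = arcT a then 1 else 0

/-- The matrix `F_o` with `(F_o)_{x,a} = δ_{x,o(a)}`. -/
def Fo (G : SimpleGraph V) : Matrix V (GArc G) ℂ := fun x a => if x = arcO a then 1 else 0

/-- The 0/1 matrix `R` with `R_{ab} = 1` iff `m(a,b) = (t(b),o(a)) ∈ A(G) ∩ A(G)⁻¹`. -/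
def Rmat (D : Dgraph V) : Matrix (GArc D.underlying) (GArc D.underlying) ℂ :=
  fun a b => if D.Adj (arcT b) (arcO a) ∧ D.Adj (arcO a) (arcT b) then 1 else 0

/-- `U_θ^{(n,+)}`: the 0/1 matrix with `(a,b)` entry `1` iff `Re(D_θ U_θⁿ)_{ab} > 0`. -/
def suppPow (D : Dgraph V) (η : ℝ) (n : ℕ) :
    Matrix (GArc D.underlying) (GArc D.underlying) ℂ :=
  suppPos (Dtheta D.underlying (etaFun D η) * transferU D.underlying (etaFun D η) ^ n)

/-- `U_θ^{(n,−)}`: the 0/1 matrix with `(a,b)` entry `1` iff `Re(D_θ U_θⁿ)_{ab} < 0`. -/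
def suppPowNeg (D : Dgraph V) (η : ℝ) (n : ℕ) :
    Matrix (GArc D.underlying) (GArc D.underlying) ℂ :=
  suppNeg (Dtheta D.underlying (etaFun D η) * transferU D.underlying (etaFun D η) ^ n)

/-- The number of digons of a digraph. -/
def digonCount (D : Dgraph V) : ℕ :=
  (Finset.univ.filter fun p : V × V => D.Adj p.1 p.2 ∧ D.Adj p.2 p.1).card / 2

/-- The digraph `Y_{a,n-a}`: two complete (digon) blocks `[a]` and `[n]∖[a]`, with all
arcs from the first block to the second. -/
def Ydigraph (n a : ℕ) : Dgraph (Fin n) where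
  adj x y := decide ((x ≠ y) ∧
    ((x.val < a ∧ y.val < a) ∨ (a ≤ x.val ∧ a ≤ y.val) ∨ (x.val < a ∧ a ≤ y.val)))
  loopless := fun v => by simp

/-- The shift operator as a real matrix. -/
def shiftSR (G : SimpleGraph V) : Matrix (GArc G) (GArc G) ℝ :=
  fun a b => if a = arcInv b then 1 else 0

/-- The Grover transfer matrix as a real matrix, given by its entries
`U_{ab} = (2/deg t(b)) δ_{t(b),o(a)} − δ_{a⁻¹,b}`. -/
def groverEnt (G : SimpleGraph V) [DecidableRel G.Adj] : Matrix (GArc G) (GArc G) ℝ :=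
  fun a b => 2 / (G.degree (arcT b)) * (if arcT b = arcO a then 1 else 0)
    - (if arcInv a = b then 1 else 0)

section TransferMatrix

variable (G : SimpleGraph V) [DecidableRel G.Adj]

lemma coinC_apply (a b : GArc G) :
    coinC G a b = (if arcT a = arcT b then 2 / (G.degree (arcT b) : ℂ) else 0)
      - if a = b then 1 else 0 := by
  have hK : ∀ d : ℕ, star ((1 / √(d : ℝ) : ℝ) : ℂ) * ((1 / √(d : ℝ) : ℝ) : ℂ) = 1 / d := by
    intro d
    rw [Complex.star_def, Complex.conj_ofReal, ← Complex.ofReal_mul, div_mul_div_comm,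
      one_mul, Real.mul_self_sqrt d.cast_nonneg]
    push_cast
    rfl
  simp only [coinC, Matrix.sub_apply, Matrix.smul_apply, mul_apply, conjTranspose_apply, bdK,
    one_apply, smul_eq_mul]
  rw [Finset.sum_eq_single (arcT a) (fun v _ hv => by simp [hv]) (by simp)]
  by_cases h : arcT a = arcT b
  · rw [if_pos rfl, if_pos h, if_pos h, ← h, hK, mul_one_div]
  · rw [if_neg h, if_neg h, mul_zero, mul_zero]

lemma transferU_apply (θ : GArc G → ℝ) (a b : GArc G) :
    transferU G θ a b = Complex.exp (θ (arcInv a) * Complex.I) * coinC G (arcInv a) b := by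
  rw [transferU, mul_apply, Finset.sum_eq_single (arcInv a)]
  · simp [shiftStheta, arcInv]
  · intro c _ hc
    rw [shiftStheta, if_neg fun h => hc (by rw [h]; rfl), zero_mul]
  · simp

lemma Dtheta_mul_transferU_sq_apply_self (θ : GArc G → ℝ) (hθ : ∀ c, θ (arcInv c) = -θ c)
    (a : GArc G) :
    (Dtheta G θ * transferU G θ ^ 2) a a =
      (((2 / G.degree (arcO a) - 1) * (2 / G.degree (arcT a) - 1) : ℝ) : ℂ) *
        Complex.exp (θ a * Complex.I) := by
  rw [pow_two, Dtheta, diagonal_mul, mul_apply, Finset.sum_eq_single (arcInv a)]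
  · have hinv : arcInv (arcInv a) = a := rfl
    have hT : arcT (arcInv a) = arcO a := rfl
    have hexp : Complex.exp (-θ a * Complex.I) * Complex.exp (θ a * Complex.I) = 1 := by
      rw [← Complex.exp_add, neg_mul, neg_add_cancel, Complex.exp_zero]
    rw [transferU_apply, transferU_apply, coinC_apply, coinC_apply, hinv, hT, hθ]
    simp only [if_true]
    push_cast
    linear_combination (2 / (G.degree (arcO a) : ℂ) - 1) * (2 / (G.degree (arcT a) : ℂ) - 1) *
      Complex.exp (θ a * Complex.I) * hexp
  · intro c _ hc
    have hc' : arcInv c ≠ a := fun h => hc (by rw [← h]; rfl)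
    rw [transferU_apply, transferU_apply, coinC_apply, coinC_apply, if_neg hc.symm, if_neg hc']
    by_cases hca : arcO a = arcT c
    · have hac : arcO c ≠ arcT a := fun h => hc (Subtype.ext (Prod.ext h hca.symm))
      rw [show arcT (arcInv c) = arcO c from rfl, if_neg hac]
      ring
    · rw [show arcT (arcInv a) = arcO a from rfl, if_neg hca]
      ring
  · simp

end TransferMatrix

section EtaFunction

variable (D : Dgraph V) (η : ℝ)

omit [Fintype V] [DecidableEq V] in
lemma etaFun_arcInv (a : GArc D.underlying) : etaFun D η (arcInv a) = -etaFun D η a := by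
  rcases a with ⟨⟨x, y⟩, hxy | hyx⟩ <;>
    by_cases h : D.Adj y x <;> by_cases h' : D.Adj x y <;> simp_all [etaFun, arcInv, arcO, arcT]

omit [Fintype V] [DecidableEq V] in
lemma cos_etaFun_pos_iff (hη1 : Real.pi / 2 ≤ η) (hη2 : η ≤ Real.pi + Real.pi / 2)
    (a : GArc D.underlying) :
    0 < Real.cos (etaFun D η a) ↔ D.Adj (arcO a) (arcT a) ∧ D.Adj (arcT a) (arcO a) := by
  have hcos : Real.cos η ≤ 0 := Real.cos_nonpos_of_pi_div_two_le_of_le hη1 hη2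
  have harc : D.Adj (arcO a) (arcT a) ∨ D.Adj (arcT a) (arcO a) := a.2
  by_cases h : D.Adj (arcO a) (arcT a) <;> by_cases h' : D.Adj (arcT a) (arcO a) <;>
    simp_all [etaFun]

lemma suppPow_two_apply_self (hη1 : Real.pi / 2 ≤ η) (hη2 : η ≤ Real.pi + Real.pi / 2)
    (hdeg : ∀ v, 3 ≤ D.underlying.degree v) (a : GArc D.underlying) :
    suppPow D η 2 a a = if D.Adj (arcO a) (arcT a) ∧ D.Adj (arcT a) (arcO a) then 1 else 0 := by
  have hneg : ∀ v, 2 / (D.underlying.degree v : ℝ) - 1 < 0 := by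
    intro v
    have : (3 : ℝ) ≤ D.underlying.degree v := by exact_mod_cast hdeg v
    rw [sub_neg, div_lt_one (by linarith)]
    linarith
  rw [suppPow, suppPos, Dtheta_mul_transferU_sq_apply_self _ _ (etaFun_arcInv D η),
    Complex.re_ofReal_mul, Complex.exp_ofReal_mul_I_re]
  exact if_congr ((mul_pos_iff_of_pos_left (mul_pos_of_neg_of_neg (hneg _) (hneg _))).trans
    (cos_etaFun_pos_iff D η hη1 hη2 a)) rfl rfl

lemma trace_suppPow_two (hη1 : Real.pi / 2 ≤ η) (hη2 : η ≤ Real.pi + Real.pi / 2)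
    (hdeg : ∀ v, 3 ≤ D.underlying.degree v) :
    (suppPow D η 2).trace =
      (Finset.univ.filter fun p : V × V => D.Adj p.1 p.2 ∧ D.Adj p.2 p.1).card := by
  rw [trace]
  simp only [diag, suppPow_two_apply_self D η hη1 hη2 hdeg]
  rw [Finset.sum_boole]
  congr 1
  refine Finset.card_bij (fun a _ => a.1)
    (fun a ha => Finset.mem_filter.mpr ⟨Finset.mem_univ _, (Finset.mem_filter.mp ha).2⟩)
    (fun a _ b _ h => Subtype.ext h) fun p hp => ?_
  have hp := (Finset.mem_filter.mp hp).2
  exact ⟨⟨p, Or.inl hp.1⟩, Finset.mem_filter.mpr ⟨Finset.mem_univ _, hp⟩, rfl⟩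

end EtaFunction

section Ydigraph

variable (n k : ℕ)

lemma Ydigraph_underlying_adj (x y : Fin n) : (Ydigraph n k).underlying.Adj x y ↔ x ≠ y := by
  simp only [Dgraph.underlying, Ydigraph, Dgraph.Adj, decide_eq_true_eq, ne_eq, Fin.ext_iff]
  omega

lemma Ydigraph_degree (v : Fin n) : (Ydigraph n k).underlying.degree v = n - 1 := by
  have hnbr : (Ydigraph n k).underlying.neighborFinset v = Finset.univ.erase v := by
    ext w
    simp [Ydigraph_underlying_adj, ne_comm]
  rw [SimpleGraph.degree, hnbr, Finset.card_erase_of_mem (Finset.mem_univ v), Finset.card_univ,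
    Fintype.card_fin]

lemma Ydigraph_digon_iff (x y : Fin n) :
    (Ydigraph n k).Adj x y ∧ (Ydigraph n k).Adj y x ↔ x ≠ y ∧ ((x : ℕ) < k ↔ (y : ℕ) < k) := by
  simp only [Ydigraph, Dgraph.Adj, decide_eq_true_eq, ne_eq, Fin.ext_iff]
  omega

lemma card_Ydigraph_digons (hk : k ≤ n) :
    (Finset.univ.filter fun p : Fin n × Fin n =>
      (Ydigraph n k).Adj p.1 p.2 ∧ (Ydigraph n k).Adj p.2 p.1).card =
      k * (k - 1) + (n - k) * (n - k - 1) := by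
  set B : Finset (Fin n) := Finset.univ.filter fun x => (x : ℕ) < k
  have hB : B.card = k := by rw [Fin.card_filter_val_lt, min_eq_right hk]
  have hBc : Bᶜ.card = n - k := by rw [Finset.card_compl, Fintype.card_fin, hB]
  have hsplit : (Finset.univ.filter fun p : Fin n × Fin n =>
      (Ydigraph n k).Adj p.1 p.2 ∧ (Ydigraph n k).Adj p.2 p.1) = B.offDiag ∪ Bᶜ.offDiag := by
    ext p
    simp only [Finset.mem_filter, Finset.mem_univ, true_and, Ydigraph_digon_iff,
      Finset.mem_union, Finset.mem_offDiag, Finset.mem_compl, B]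
    tauto
  have hdisj : Disjoint B.offDiag Bᶜ.offDiag :=
    Finset.disjoint_left.mpr fun p hp hpc =>
      Finset.mem_compl.mp (Finset.mem_offDiag.mp hpc).1 (Finset.mem_offDiag.mp hp).1
  rw [hsplit, Finset.card_union_of_disjoint hdisj, Finset.offDiag_card, Finset.offDiag_card,
    hB, hBc, Nat.mul_sub_one, Nat.mul_sub_one]

end Ydigraph

lemma eq_of_mul_pred_add_mul_pred_eq {n a b : ℕ} (han : a ≤ n) (hbn : b ≤ n)
    (ha : n - a ≤ a) (hb : n - b ≤ b)
    (h : a * (a - 1) + (n - a) * (n - a - 1) = b * (b - 1) + (n - b) * (n - b - 1)) :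
    a = b := by
  have hcast : ∀ m : ℕ, ((m * (m - 1) : ℕ) : ℤ) = m * ((m : ℤ) - 1) := by
    rintro (_ | m) <;> simp
  have hz := congrArg (Nat.cast : ℕ → ℤ) h
  simp only [Nat.cast_add, hcast, Nat.cast_sub han, Nat.cast_sub hbn] at hz
  have hfactor : 2 * (((a : ℤ) - b) * (a + b - n)) = 0 := by linear_combination hz
  rcases mul_eq_zero.mp ((mul_eq_zero.mp hfactor).resolve_left two_ne_zero) with h' | h' <;>
    omega

/-- For `n ≥ 4`, `π/2 ≤ η ≤ π`, and `a ≠ b` with `a, b ≥ n − a, n − b` (i.e. `a, b ≥ n/2`),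
the characteristic polynomials of `U_θ^{(2,+)}(Y_{a,n−a})` and `U_θ^{(2,+)}(Y_{b,n−b})`
differ. -/
theorem stmt19 (n : ℕ) (hn : 4 ≤ n) (η : ℝ) (hη1 : Real.pi / 2 ≤ η) (hη2 : η ≤ Real.pi)
    (a b : ℕ) (han : a ≤ n) (hbn : b ≤ n) (ha : n - a ≤ a) (hb : n - b ≤ b) (hab : a ≠ b) :
    (suppPow (Ydigraph n a) η 2).charpoly ≠ (suppPow (Ydigraph n b) η 2).charpoly := by
  have hη2' : η ≤ Real.pi + Real.pi / 2 := by linarith [Real.pi_pos]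
  have htrace : ∀ k ≤ n, (suppPow (Ydigraph n k) η 2).trace =
      ((k * (k - 1) + (n - k) * (n - k - 1) : ℕ) : ℂ) := fun k hk => by
    rw [trace_suppPow_two _ η hη1 hη2' fun v => by rw [Ydigraph_degree]; omega,
      card_Ydigraph_digons n k hk]
  intro hchar
  have htr : (suppPow (Ydigraph n a) η 2).trace = (suppPow (Ydigraph n b) η 2).trace := by
    rw [trace_eq_neg_charpoly_nextCoeff, trace_eq_neg_charpoly_nextCoeff, hchar]
  rw [htrace a han, htrace b hbn, Nat.cast_inj] at htr
  exact hab (eq_of_mul_pred_add_mul_pred_eq han hbn ha hb htr)
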